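/- Let f₁, f₂ : ℂ → ℂ be smooth (infinitely differentiable as functions of two real variables) on ℂ ∖ {0}, and for such a function f write ∂̄f(z) := (1/2)(∂f/∂x + i·∂f/∂y)(z) for the Wirtinger derivative with respect to z̄. Assume that f₁(z)f₂(z) → 0 as |z| → ∞, that z ↦ f₁(z)f₂(z)/z extends to a smooth function on all of ℂ, and that the functions z ↦ (∂̄f₁)(z)·f₂(z)/z and z ↦ f₁(z)·(∂̄f₂)(z)/z are Lebesgue-integrable on ℂ. Then ∫_ℂ (∂̄f₁)(z)·f₂(z)/z dμ(z) = −∫_ℂ f₁(z)·(∂̄f₂)(z)/z dμ(z), where μ is Lebesgue measure on ℂ ≅ ℝ². (This is the ∂̄-case of Lemma 5.10 (lem:ibp) for F = ℂ: since (∂/∂z̄)f(e^z x)|_{z=0} = x̄·∂̄f(x) and dx^× = ζ(1)dx/(x x̄), the stated identity is ∫_{ℂ^×}(∂/∂z̄)f₁(e^z x)|_{z=0} f₂(x) dx^× = −∫_{ℂ^×} f₁(x)(∂/∂z̄)f₂(e^z x)|_{z=0} dx^×.) -/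

import Mathlib

open MeasureTheory Filter Set Complex
open scoped Interval Topology

/-- The Wirtinger derivative `∂̄f(z) = (1/2)(∂f/∂x + i ∂f/∂y)(z)`, where `∂f/∂x` and
`∂f/∂y` are the (real) directional derivatives of `f` at `z` in the directions `1`
and `i`. -/
noncomputable def wirtingerBar (f : ℂ → ℂ) (z : ℂ) : ℂ :=
  (1 / 2) * (fderiv ℝ f z 1 + Complex.I * fderiv ℝ f z Complex.I)

/-- Integration by parts on `ℂ^×` (Lemma 5.10, complex case, `∂̄`-version): if
`f₁, f₂ : ℂ → ℂ` are smooth away from `0`, `f₁ f₂ → 0` as `|z| → ∞`, `f₁(z)f₂(z)/z`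
extends smoothly over `0`, and both `∂̄f₁(z) f₂(z)/z` and `f₁(z) ∂̄f₂(z)/z` are Lebesgue
integrable on `ℂ`, then `∫ ∂̄f₁(z) f₂(z)/z = −∫ f₁(z) ∂̄f₂(z)/z`. -/
lemma wirtingerBar_mul {u v : ℂ → ℂ} {z : ℂ} (hu : DifferentiableAt ℝ u z)
    (hv : DifferentiableAt ℝ v z) :
    wirtingerBar (fun w => u w * v w) z
      = wirtingerBar u z * v z + u z * wirtingerBar v z := by
  unfold wirtingerBar
  rw [fderiv_fun_mul hu hv]
  simp only [ContinuousLinearMap.add_apply, ContinuousLinearMap.smul_apply, smul_eq_mul]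
  ring

lemma wirtingerBar_of_holo {f : ℂ → ℂ} {z : ℂ} (hf : DifferentiableAt ℂ f z) :
    wirtingerBar f z = 0 := by
  unfold wirtingerBar
  rw [hf.fderiv_restrictScalars ℝ]
  have h1 : (fderiv ℂ f z).restrictScalars ℝ Complex.I
      = Complex.I * (fderiv ℂ f z).restrictScalars ℝ 1 := by
    have := (fderiv ℂ f z).map_smul Complex.I (1 : ℂ)
    simpa [smul_eq_mul] using this
  rw [h1]
  set c := (fderiv ℂ f z).restrictScalars ℝ (1:ℂ)
  have : Complex.I * (Complex.I * c) = -c := by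
    rw [← mul_assoc, Complex.I_mul_I]; ring
  rw [this]; ring

lemma wirtingerBar_congr_nhds {u v : ℂ → ℂ} {z : ℂ} (h : u =ᶠ[nhds z] v) :
    wirtingerBar u z = wirtingerBar v z := by
  unfold wirtingerBar; rw [Filter.EventuallyEq.fderiv_eq h]

lemma rect_integral_eq (F : ℂ → ℂ) (a b c d : ℝ) (hab : a ≤ b) (hcd : c ≤ d)
    (hF : IntegrableOn F ([[a, b]] ×ℂ [[c, d]])) :
    (∫ x in a..b, ∫ y in c..d, F (x + y * Complex.I))
      = ∫ z in [[a, b]] ×ℂ [[c, d]], F z := by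
  have hpre : measurableEquivRealProd.symm ⁻¹' ([[a, b]] ×ℂ [[c, d]])
      = [[a, b]] ×ˢ [[c, d]] := rfl
  rw [← (volume_preserving_equiv_real_prod.symm _).setIntegral_preimage_emb
      (MeasurableEquiv.measurableEmbedding _) F _, hpre]
  rw [← (volume_preserving_equiv_real_prod.symm _).integrableOn_comp_preimage
      (MeasurableEquiv.measurableEmbedding _), hpre] at hF
  rw [Measure.volume_eq_prod] at hF ⊢
  have hF' : IntegrableOn (fun p : ℝ × ℝ => F (measurableEquivRealProd.symm p))
      ([[a, b]] ×ˢ [[c, d]]) (volume.prod volume) := hF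
  rw [setIntegral_prod _ hF']
  rw [uIcc_of_le hab, uIcc_of_le hcd]
  rw [intervalIntegral.integral_of_le hab, ← integral_Icc_eq_integral_Ioc]
  refine setIntegral_congr_fun (by measurability) (fun x _ => ?_)
  rw [intervalIntegral.integral_of_le hcd, ← integral_Icc_eq_integral_Ioc]
  refine setIntegral_congr_fun (by measurability) (fun y _ => ?_)
  congr 1
  simp [measurableEquivRealProd_symm_apply, Complex.ext_iff]

theorem mult_integration_by_parts_complex_bar (f₁ f₂ : ℂ → ℂ)
    (h₁ : ContDiffOn ℝ (⊤ : ℕ∞) f₁ {(0 : ℂ)}ᶜ) (h₂ : ContDiffOn ℝ (⊤ : ℕ∞) f₂ {(0 : ℂ)}ᶜ)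
    (hinfty : Tendsto (fun z => f₁ z * f₂ z) (cocompact ℂ) (nhds 0))
    (hext : ∃ h : ℂ → ℂ, ContDiff ℝ (⊤ : ℕ∞) h ∧ ∀ z : ℂ, z ≠ 0 → h z = f₁ z * f₂ z / z)
    (hi₁ : Integrable (fun z : ℂ => wirtingerBar f₁ z * f₂ z / z))
    (hi₂ : Integrable (fun z : ℂ => f₁ z * wirtingerBar f₂ z / z)) :
    ∫ z : ℂ, wirtingerBar f₁ z * f₂ z / z =
      - ∫ z : ℂ, f₁ z * wirtingerBar f₂ z / z := by
  obtain ⟨h, hh, heq⟩ := hext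
  have hdiffh : Differentiable ℝ h := hh.differentiable (by simp)
  set g : ℂ → ℂ := fun z => wirtingerBar f₁ z * f₂ z / z + f₁ z * wirtingerBar f₂ z / z
    with hgdef
  have hgint : Integrable g := hi₁.add hi₂
  have h0ae : ∀ᵐ z : ℂ, z ≠ (0:ℂ) := by
    rw [ae_iff]
    have : {z : ℂ | ¬ z ≠ 0} = {0} := by ext w; simp
    rw [this]; exact measure_singleton 0
  -- Step A : wirtingerBar h agrees with g away from 0
  have hA : ∀ z : ℂ, z ≠ 0 → wirtingerBar h z = g z := by
    intro z hz
    have hop : {(0:ℂ)}ᶜ ∈ nhds z := isOpen_compl_singleton.mem_nhds hz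
    have hdf₁ : DifferentiableAt ℝ f₁ z := (h₁.contDiffAt hop).differentiableAt (by simp)
    have hdf₂ : DifferentiableAt ℝ f₂ z := (h₂.contDiffAt hop).differentiableAt (by simp)
    have hdinv : DifferentiableAt ℂ (fun w : ℂ => w⁻¹) z := differentiableAt_inv hz
    have he : h =ᶠ[nhds z] fun w => f₁ w * (f₂ w * w⁻¹) := by
      filter_upwards [hop] with w hw
      rw [heq w hw, div_eq_mul_inv, mul_assoc]
    rw [wirtingerBar_congr_nhds he,
      wirtingerBar_mul hdf₁ (hdf₂.fun_mul (hdinv.restrictScalars ℝ)),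
      wirtingerBar_mul hdf₂ (hdinv.restrictScalars ℝ), wirtingerBar_of_holo hdinv]
    simp only [hgdef, div_eq_mul_inv]
    ring
  have haeq : (fun z : ℂ => wirtingerBar h z) =ᵐ[volume] g := by
    filter_upwards [h0ae] with z hz; exact hA z hz
  have hWint : Integrable (fun z : ℂ => wirtingerBar h z) := hgint.congr haeq.symm
  -- names for G
  set G : ℂ → ℂ := fun z => (2 * Complex.I) * wirtingerBar h z with hGdef
  have hGint : Integrable G := hWint.const_mul _
  have hGeq : ∀ z : ℂ,
      Complex.I • fderiv ℝ h z 1 - fderiv ℝ h z Complex.I = G z := by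
    intro z
    simp only [hGdef, wirtingerBar, smul_eq_mul]
    set c₁ := fderiv ℝ h z 1; set c₂ := fderiv ℝ h z Complex.I
    linear_combination (-c₂) * Complex.I_sq
  -- Step B : the rectangle identity for each n
  have key : ∀ n : ℕ,
      ((∫ x : ℝ in (-(n:ℝ))..(n:ℝ), h (x + (-(n:ℝ)) * Complex.I)) -
        (∫ x : ℝ in (-(n:ℝ))..(n:ℝ), h (x + (n:ℝ) * Complex.I)) +
        Complex.I • (∫ y : ℝ in (-(n:ℝ))..(n:ℝ), h ((n:ℝ) + y * Complex.I)) -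
        Complex.I • ∫ y : ℝ in (-(n:ℝ))..(n:ℝ), h ((-(n:ℝ)) + y * Complex.I))
      = ∫ z in [[-(n:ℝ), (n:ℝ)]] ×ℂ [[-(n:ℝ), (n:ℝ)]], G z := by
    intro n
    have hn : (-(n:ℝ)) ≤ (n:ℝ) := by
      have : (0:ℝ) ≤ n := n.cast_nonneg; linarith
    have hIG : IntegrableOn (fun z => Complex.I • fderiv ℝ h z 1 - fderiv ℝ h z Complex.I)
        ([[-(n:ℝ), (n:ℝ)]] ×ℂ [[-(n:ℝ), (n:ℝ)]]) := by
      have : (fun z => Complex.I • fderiv ℝ h z 1 - fderiv ℝ h z Complex.I) = G :=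
        funext hGeq
      rw [this]; exact hGint.integrableOn
    have := Complex.integral_boundary_rect_of_hasFDerivAt_real_off_countable h
      (fderiv ℝ h) (⟨-(n:ℝ), -(n:ℝ)⟩ : ℂ) (⟨(n:ℝ), (n:ℝ)⟩ : ℂ) ∅ countable_empty
      hh.continuous.continuousOn
      (fun x _ => (hdiffh x).hasFDerivAt) hIG
    simp only [show ((⟨-(n:ℝ), -(n:ℝ)⟩ : ℂ)).re = -(n:ℝ) from rfl,
      show ((⟨-(n:ℝ), -(n:ℝ)⟩ : ℂ)).im = -(n:ℝ) from rfl,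
      show ((⟨(n:ℝ), (n:ℝ)⟩ : ℂ)).re = (n:ℝ) from rfl,
      show ((⟨(n:ℝ), (n:ℝ)⟩ : ℂ)).im = (n:ℝ) from rfl, Complex.ofReal_neg] at this
    rw [this]
    have : (∫ x : ℝ in (-(n:ℝ))..(n:ℝ), ∫ y : ℝ in (-(n:ℝ))..(n:ℝ),
        Complex.I • fderiv ℝ h (x + y * Complex.I) 1 -
          fderiv ℝ h (x + y * Complex.I) Complex.I)
        = ∫ x : ℝ in (-(n:ℝ))..(n:ℝ), ∫ y : ℝ in (-(n:ℝ))..(n:ℝ),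
            G (x + y * Complex.I) := by
      simp only [hGeq]
    rw [this, rect_integral_eq G _ _ _ _ hn hn (by
      have : (fun z => Complex.I • fderiv ℝ h z 1 - fderiv ℝ h z Complex.I) = G :=
        funext hGeq
      exact hGint.integrableOn)]
  -- monotone rectangles
  set s : ℕ → Set ℂ := fun n => [[-(n:ℝ), (n:ℝ)]] ×ℂ [[-(n:ℝ), (n:ℝ)]] with hs
  have hncast : ∀ n : ℕ, (-(n:ℝ)) ≤ (n:ℝ) := by
    intro n; have : (0:ℝ) ≤ n := n.cast_nonneg; linarith
  have hIcc : ∀ n : ℕ, s n = Icc (-(n:ℝ)) n ×ℂ Icc (-(n:ℝ)) n := by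
    intro n; simp only [hs]; rw [uIcc_of_le (hncast n)]
  have hsm : ∀ n, MeasurableSet (s n) := by
    intro n; rw [hIcc n]
    exact (measurableSet_Icc.preimage Complex.measurable_re).inter
      (measurableSet_Icc.preimage Complex.measurable_im)
  have hmono : Monotone s := by
    intro m n hmn
    rw [hIcc m, hIcc n]
    have hc : (m:ℝ) ≤ (n:ℝ) := by exact_mod_cast hmn
    intro z hz
    rw [mem_reProdIm] at hz ⊢
    exact ⟨Icc_subset_Icc (by linarith) hc hz.1, Icc_subset_Icc (by linarith) hc hz.2⟩
  have hunion : (⋃ n, s n) = univ := by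
    ext z
    simp only [mem_iUnion, mem_univ, iff_true]
    obtain ⟨n, hn⟩ := exists_nat_ge (max |z.re| |z.im|)
    refine ⟨n, ?_⟩
    rw [hIcc n, mem_reProdIm, mem_Icc, mem_Icc]
    have h1 : |z.re| ≤ (n:ℝ) := le_trans (le_max_left _ _) hn
    have h2 : |z.im| ≤ (n:ℝ) := le_trans (le_max_right _ _) hn
    rw [abs_le] at h1 h2
    exact ⟨⟨h1.1, h1.2⟩, ⟨h2.1, h2.2⟩⟩
  have hS : Tendsto (fun n : ℕ => ∫ z in s n, G z) atTop (𝓝 (∫ z : ℂ, G z)) := by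
    have := tendsto_setIntegral_of_monotone hsm hmono
      (by rw [hunion]; exact hGint.integrableOn)
    rwa [hunion, setIntegral_univ] at this
  -- boundary tends to zero
  have hB : Tendsto (fun n : ℕ =>
      ((∫ x : ℝ in (-(n:ℝ))..(n:ℝ), h (x + (-(n:ℝ)) * Complex.I)) -
        (∫ x : ℝ in (-(n:ℝ))..(n:ℝ), h (x + (n:ℝ) * Complex.I)) +
        Complex.I • (∫ y : ℝ in (-(n:ℝ))..(n:ℝ), h ((n:ℝ) + y * Complex.I)) -
        Complex.I • ∫ y : ℝ in (-(n:ℝ))..(n:ℝ), h ((-(n:ℝ)) + y * Complex.I)))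
      atTop (𝓝 0) := by
    rw [NormedAddCommGroup.tendsto_nhds_zero]
    intro ε hε
    have hsmall : ∀ᶠ z : ℂ in cocompact ℂ, ‖f₁ z * f₂ z‖ < ε/9 := by
      have := Metric.tendsto_nhds.mp hinfty (ε/9) (by positivity)
      filter_upwards [this] with z hz
      rwa [dist_zero_right] at hz
    obtain ⟨K, hK, hKs⟩ := mem_cocompact.mp hsmall
    obtain ⟨M, hM⟩ := hK.isBounded.subset_closedBall 0
    have hptwise : ∀ n : ℕ, 1 ≤ n → M + 1 ≤ (n:ℝ) → ∀ p : ℂ, (n:ℝ) ≤ ‖p‖ →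
        ‖h p‖ ≤ ε/9/(n:ℝ) := by
      intro n hn1 hnM p hp
      have hn1' : (1:ℝ) ≤ (n:ℝ) := by exact_mod_cast hn1
      have hpK : p ∉ K := by
        intro hpK
        have := hM hpK
        rw [Metric.mem_closedBall, dist_zero_right] at this
        linarith
      have hfp : ‖f₁ p * f₂ p‖ < ε/9 := hKs hpK
      have hp0 : p ≠ 0 := by
        intro h0; rw [h0, norm_zero] at hp; linarith
      rw [heq p hp0, norm_div]
      have hnpos : (0:ℝ) < (n:ℝ) := by linarith
      exact div_le_div₀ (by positivity) hfp.le hnpos hp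
    filter_upwards [eventually_ge_atTop 1,
      (tendsto_natCast_atTop_atTop (R := ℝ)).eventually_ge_atTop (M + 1)] with n hn1 hnM
    have hn1' : (1:ℝ) ≤ (n:ℝ) := by exact_mod_cast hn1
    have hnpos : (0:ℝ) < (n:ℝ) := by linarith
    have habs : |(n:ℝ) - (-(n:ℝ))| = 2 * (n:ℝ) := by
      rw [_root_.abs_of_nonneg (by linarith : (0:ℝ) ≤ (n:ℝ) - -(n:ℝ))]; ring
    have hCbound : ε/9/(n:ℝ) * |(n:ℝ) - (-(n:ℝ))| = 2 * (ε/9) := by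
      rw [habs]; field_simp
    have hbd : ∀ F : ℝ → ℂ, (∀ x ∈ Set.uIoc (-(n:ℝ)) (n:ℝ), ‖F x‖ ≤ ε/9/(n:ℝ)) →
        ‖∫ x in (-(n:ℝ))..(n:ℝ), F x‖ ≤ 2 * (ε/9) := by
      intro F hF
      calc ‖∫ x in (-(n:ℝ))..(n:ℝ), F x‖ ≤ ε/9/(n:ℝ) * |(n:ℝ) - (-(n:ℝ))| :=
        intervalIntegral.norm_integral_le_of_norm_le_const hF
        _ = 2 * (ε/9) := hCbound
    have him : ∀ x : ℝ, ∀ c : ℝ, (n:ℝ) ≤ |c| → (n:ℝ) ≤ ‖(x : ℂ) + (c:ℝ) * Complex.I‖ := by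
      intro x c hc
      refine le_trans hc ?_
      have := Complex.abs_im_le_norm ((x : ℂ) + (c:ℝ) * Complex.I)
      simpa using this
    have hre : ∀ y : ℝ, ∀ c : ℝ, (n:ℝ) ≤ |c| → (n:ℝ) ≤ ‖((c:ℝ) : ℂ) + (y:ℝ) * Complex.I‖ := by
      intro y c hc
      refine le_trans hc ?_
      have := Complex.abs_re_le_norm (((c:ℝ) : ℂ) + (y:ℝ) * Complex.I)
      simpa using this
    have hnn : (n:ℝ) ≤ |(-(n:ℝ))| := by rw [abs_neg, _root_.abs_of_nonneg (by linarith : (0:ℝ) ≤ (n:ℝ))]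
    have hnp : (n:ℝ) ≤ |(n:ℝ)| := by rw [_root_.abs_of_nonneg (by linarith : (0:ℝ) ≤ (n:ℝ))]
    have e1 : ‖∫ x : ℝ in (-(n:ℝ))..(n:ℝ), h (x + (-(n:ℝ)) * Complex.I)‖ ≤ 2 * (ε/9) :=
      hbd _ (fun x _ => by
        have := him x (-(n:ℝ)) hnn
        rw [Complex.ofReal_neg] at this
        exact hptwise n hn1 hnM _ this)
    have e2 : ‖∫ x : ℝ in (-(n:ℝ))..(n:ℝ), h (x + (n:ℝ) * Complex.I)‖ ≤ 2 * (ε/9) :=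
      hbd _ (fun x _ => hptwise n hn1 hnM _ (him x (n:ℝ) hnp))
    have e3 : ‖∫ y : ℝ in (-(n:ℝ))..(n:ℝ), h ((n:ℝ) + y * Complex.I)‖ ≤ 2 * (ε/9) :=
      hbd _ (fun y _ => hptwise n hn1 hnM _ (hre y (n:ℝ) hnp))
    have e4 : ‖∫ y : ℝ in (-(n:ℝ))..(n:ℝ), h ((-(n:ℝ)) + y * Complex.I)‖ ≤ 2 * (ε/9) :=
      hbd _ (fun y _ => by
        have := hre y (-(n:ℝ)) hnn
        rw [Complex.ofReal_neg] at this
        exact hptwise n hn1 hnM _ this)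
    have hInorm : ∀ w : ℂ, ‖Complex.I • w‖ = ‖w‖ := by
      intro w; rw [smul_eq_mul, norm_mul, Complex.norm_I, one_mul]
    set N₁ := ∫ x : ℝ in (-(n:ℝ))..(n:ℝ), h (x + (-(n:ℝ)) * Complex.I) with hN₁
    set N₂ := ∫ x : ℝ in (-(n:ℝ))..(n:ℝ), h (x + (n:ℝ) * Complex.I) with hN₂
    set N₃ := ∫ y : ℝ in (-(n:ℝ))..(n:ℝ), h ((n:ℝ) + y * Complex.I) with hN₃
    set N₄ := ∫ y : ℝ in (-(n:ℝ))..(n:ℝ), h ((-(n:ℝ)) + y * Complex.I) with hN₄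
    have t1 : ‖N₁ - N₂ + Complex.I • N₃ - Complex.I • N₄‖
        ≤ ‖N₁‖ + ‖N₂‖ + ‖N₃‖ + ‖N₄‖ := by
      have u1 := norm_sub_le (N₁ - N₂ + Complex.I • N₃) (Complex.I • N₄)
      have u2 := norm_add_le (N₁ - N₂) (Complex.I • N₃)
      have u3 := norm_sub_le N₁ N₂
      rw [hInorm] at u1 u2
      linarith
    have : ‖N₁ - N₂ + Complex.I • N₃ - Complex.I • N₄‖ ≤ 8 * (ε/9) := by
      linarith
    linarith
  -- conclude
  have hG0 : (∫ z : ℂ, G z) = 0 := by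
    have hS' : Tendsto (fun n : ℕ =>
        ((∫ x : ℝ in (-(n:ℝ))..(n:ℝ), h (x + (-(n:ℝ)) * Complex.I)) -
          (∫ x : ℝ in (-(n:ℝ))..(n:ℝ), h (x + (n:ℝ) * Complex.I)) +
          Complex.I • (∫ y : ℝ in (-(n:ℝ))..(n:ℝ), h ((n:ℝ) + y * Complex.I)) -
          Complex.I • ∫ y : ℝ in (-(n:ℝ))..(n:ℝ), h ((-(n:ℝ)) + y * Complex.I)))
        atTop (𝓝 (∫ z : ℂ, G z)) := by
      refine hS.congr (fun n => ?_)
      exact (key n).symm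
    exact tendsto_nhds_unique hS' hB
  have hw0 : (∫ z : ℂ, wirtingerBar h z) = 0 := by
    have : (∫ z : ℂ, G z) = (2 * Complex.I) * ∫ z : ℂ, wirtingerBar h z := by
      rw [hGdef]; exact integral_const_mul _ _
    rw [this] at hG0
    rcases mul_eq_zero.mp hG0 with h' | h'
    · exfalso
      have : (2 : ℂ) * Complex.I ≠ 0 := by
        simp [Complex.ext_iff]
      exact this h'
    · exact h'
  have hg0 : (∫ z : ℂ, g z) = 0 := by
    rw [← integral_congr_ae haeq]; exact hw0
  have hsum : (∫ z : ℂ, wirtingerBar f₁ z * f₂ z / z)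
      + (∫ z : ℂ, f₁ z * wirtingerBar f₂ z / z) = 0 := by
    rw [← integral_add hi₁ hi₂]; exact hg0
  exact eq_neg_of_add_eq_zero_left hsum
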